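/- arXiv:0809.2843 — 7 statements merged into one kernel-verified Lean document; each statement's English description precedes it below -/
import Mathlib

section
/- Let A be a unital C*-algebra, let a ∈ A be self-adjoint, let r ∈ A be a projection, and let ε be a real number with 0 < ε < 1 and ‖a − r‖ < ε. Then every point x of the spectrum of a satisfies |x| < 2√ε or |x − 1| < 2√ε; that is, the spectrum of a is contained in (−2√ε, 2√ε) ∪ (1 − 2√ε, 1 + 2√ε). -/
/-!
Writing `a = r + d` with `r² = r`, one gets `a² - a = r d + d r + d² - d`, so
`‖a² - a‖ ≤ ‖d‖ (2‖r‖ + ‖d‖ + 1) < 4ε` for `d = a - r`, since a projection has norm at most `1`.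
By spectral mapping, `x² - x` lies in the spectrum of `a² - a` for every `x` in the spectrum
of `a`, hence `|x| |x - 1| < 4ε`, and one of the two factors must be below `2√ε`.
-/

theorem lt_or_lt_of_mul_lt_mul_self {α : Type*} [Semiring α] [LinearOrder α]
    [IsOrderedRing α] {u v c : α} (hc : 0 ≤ c) (h : u * v < c * c) : u < c ∨ v < c := by
  by_contra! hcuv
  exact (mul_le_mul hcuv.1 hcuv.2 hc (hc.trans hcuv.1)).not_gt h

theorem IsIdempotentElem.norm_mul_self_sub_self_le {A : Type*} [NormedRing A] {r : A}
    (hr : IsIdempotentElem r) (a : A) :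
    ‖a * a - a‖ ≤ ‖a - r‖ * (2 * ‖r‖ + ‖a - r‖ + 1) := by
  set d := a - r
  have hdecomp : a * a - a = r * d + d * r + d * d - d := by
    have ha : a = r + d := by simp [d]
    rw [ha, add_mul, mul_add, mul_add, hr.eq]
    abel
  calc ‖a * a - a‖ ≤ ‖r‖ * ‖d‖ + ‖d‖ * ‖r‖ + ‖d‖ * ‖d‖ + ‖d‖ := by
        rw [hdecomp]
        refine (norm_sub_le _ _).trans (add_le_add_left ?_ _)
        refine norm_add₃_le.trans (add_le_add_three ?_ ?_ ?_) <;> exact norm_mul_le _ _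
    _ = ‖d‖ * (2 * ‖r‖ + ‖d‖ + 1) := by ring

theorem spectrum.norm_mul_self_sub_self_le {𝕜 A : Type*} [NormedField 𝕜] [NormedRing A]
    [NormedAlgebra 𝕜 A] [CompleteSpace A] [NormOneClass A] {a : A} {x : 𝕜}
    (hx : x ∈ spectrum 𝕜 a) : ‖x * x - x‖ ≤ ‖a * a - a‖ := by
  have hmem := spectrum.subset_polynomial_aeval a (.X * .X - .X) ⟨x, hx, rfl⟩
  simp only [Polynomial.eval_sub, Polynomial.eval_mul, Polynomial.eval_X, map_sub, map_mul,
    Polynomial.aeval_X] at hmem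
  exact spectrum.norm_le_norm_of_mem hmem

theorem spectrum_near_projection_general
    {A : Type*} [NormedRing A] [StarRing A] [CStarRing A]
    [CompleteSpace A] [NormedAlgebra ℂ A]
    (a r : A)
    (hr : IsSelfAdjoint r) (hr2 : r * r = r)
    (ε : ℝ) (hε1 : ε < 1) (hnorm : ‖a - r‖ < ε) :
    ∀ x ∈ spectrum ℝ a, |x| < 2 * Real.sqrt ε ∨ |x - 1| < 2 * Real.sqrt ε := by
  intro x hx
  obtain _ | _ := subsingleton_or_nontrivial A
  · simp [spectrum.of_subsingleton] at hx
  have hε0 : 0 < ε := (norm_nonneg _).trans_lt hnorm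
  have hr1 : ‖r‖ ≤ 1 := IsStarProjection.norm_le r ⟨hr2, hr⟩
  have hfactor : 2 * ‖r‖ + ‖a - r‖ + 1 < 4 := by linarith
  refine lt_or_lt_of_mul_lt_mul_self (by positivity) ?_
  calc |x| * |x - 1| = ‖x * x - x‖ := by rw [← abs_mul, mul_sub_one, Real.norm_eq_abs]
    _ ≤ ‖a * a - a‖ := spectrum.norm_mul_self_sub_self_le hx
    _ ≤ ‖a - r‖ * (2 * ‖r‖ + ‖a - r‖ + 1) := IsIdempotentElem.norm_mul_self_sub_self_le hr2 a
    _ < ε * 4 := mul_lt_mul'' hnorm hfactor (norm_nonneg _) (by positivity)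
    _ = 2 * Real.sqrt ε * (2 * Real.sqrt ε) := by
        rw [mul_mul_mul_comm, Real.mul_self_sqrt hε0.le]; ring

theorem spectrum_near_projection
    {A : Type*} [NormedRing A] [StarRing A] [CStarRing A]
    [CompleteSpace A] [NormedAlgebra ℂ A] [StarModule ℂ A]
    (a r : A) (ha : IsSelfAdjoint a)
    (hr : IsSelfAdjoint r) (hr2 : r * r = r)
    (ε : ℝ) (hε0 : 0 < ε) (hε1 : ε < 1) (hnorm : ‖a - r‖ < ε) :
    ∀ x ∈ spectrum ℝ a, |x| < 2 * Real.sqrt ε ∨ |x - 1| < 2 * Real.sqrt ε :=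
  spectrum_near_projection_general a r hr hr2 ε hε1 hnorm
end

section
/- Let A be a unital C*-algebra, let a ∈ A be self-adjoint, let r ∈ A be a projection, and let ε be a real number with 0 < ε < 1/16 and ‖a − r‖ < ε. Then there exists a projection r' ∈ A lying in the closed star-subalgebra of A generated by a such that ‖r' − a‖ < 2√ε. -/
/-!
A projection `r` with `‖a - r‖ < ε` forces `‖a * a - a‖ ≤ (3 + ε) ε =: δ < 1/4`. Hence every point
`t` of the spectrum of `a` satisfies `|t| |t - 1| ≤ δ`, so it lies within `2δ` of `0` or of `1` and
never at `1/2`. The indicator of `(1/2, ∞)` is therefore continuous on the spectrum, takes values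
in `{0, 1}`, and moves each spectral point by at most `2δ`; by the functional calculus it yields a
projection in the closed star-subalgebra generated by `a` at distance at most `2δ < 2√ε` from `a`.
-/

lemma norm_mul_self_sub_self_le_of_isIdempotentElem {R : Type*} [NonUnitalNormedRing R]
    {a r : R} (hr : IsIdempotentElem r) :
    ‖a * a - a‖ ≤ (‖a‖ + ‖r‖ + 1) * ‖a - r‖ := by
  have hdecomp : a * a - a = a * (a - r) + (a - r) * r + (r - a) := by
    rw [mul_sub, sub_mul, hr.eq]; abel
  calc ‖a * a - a‖ ≤ ‖a * (a - r)‖ + ‖(a - r) * r‖ + ‖r - a‖ := hdecomp ▸ norm_add₃_le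
    _ ≤ ‖a‖ * ‖a - r‖ + ‖a - r‖ * ‖r‖ + ‖a - r‖ := by
      rw [norm_sub_rev r a]; gcongr <;> exact norm_mul_le _ _
    _ = (‖a‖ + ‖r‖ + 1) * ‖a - r‖ := by ring

noncomputable def stepAtHalf (t : ℝ) : ℝ := if 1 / 2 < t then 1 else 0

lemma stepAtHalf_eq_zero_or_one (t : ℝ) : stepAtHalf t = 0 ∨ stepAtHalf t = 1 := by
  unfold stepAtHalf; split_ifs <;> simp

lemma continuousOn_stepAtHalf {s : Set ℝ} (hs : 1 / 2 ∉ s) : ContinuousOn stepAtHalf s := by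
  intro t ht
  rcases lt_or_gt_of_ne (ne_of_mem_of_not_mem ht hs) with h | h
  · have : stepAtHalf =ᶠ[nhds t] fun _ ↦ 0 := by
      filter_upwards [Iio_mem_nhds h] with x hx using if_neg (not_lt.mpr hx.le)
    exact this.continuousAt.continuousWithinAt
  · have : stepAtHalf =ᶠ[nhds t] fun _ ↦ 1 := by
      filter_upwards [Ioi_mem_nhds h] with x hx using if_pos hx
    exact this.continuousAt.continuousWithinAt

lemma abs_stepAtHalf_sub_le {t δ : ℝ} (h : |t * t - t| ≤ δ) : |stepAtHalf t - t| ≤ 2 * δ := by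
  have hprod : |t| * |t - 1| ≤ δ := by rwa [← abs_mul, mul_sub_one]
  unfold stepAtHalf
  split_ifs with ht
  · rw [abs_of_pos (by linarith : (0 : ℝ) < t)] at hprod
    rw [abs_sub_comm]
    nlinarith [abs_nonneg (t - 1)]
  · rw [zero_sub, abs_neg]
    have : (1 : ℝ) / 2 ≤ |t - 1| := by rw [abs_sub_comm, abs_of_pos (by linarith)]; linarith
    nlinarith [abs_nonneg t]

section CStarAlgebra

variable {A : Type*} [NonUnitalCStarAlgebra A] {a : A}

lemma IsSelfAdjoint.abs_mul_self_sub_self_le_norm (ha : IsSelfAdjoint a) {t : ℝ}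
    (ht : t ∈ quasispectrum ℝ a) : |t * t - t| ≤ ‖a * a - a‖ := by
  have hcfc : cfcₙ (fun t : ℝ ↦ t * t - t) a = a * a - a := by
    rw [cfcₙ_sub (fun t : ℝ ↦ t * t) (fun t : ℝ ↦ t) a, cfcₙ_mul (fun t : ℝ ↦ t) (fun t : ℝ ↦ t) a,
      cfcₙ_id' ℝ a]
  exact hcfc ▸ norm_apply_le_norm_cfcₙ (fun t : ℝ ↦ t * t - t) a ht

lemma IsSelfAdjoint.isStarProjection_cfcₙ (ha : IsSelfAdjoint a) {f : ℝ → ℝ}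
    (hf : ContinuousOn f (quasispectrum ℝ a)) (hf0 : f 0 = 0) (h01 : ∀ t, f t = 0 ∨ f t = 1) :
    IsStarProjection (cfcₙ f a) := by
  refine isStarProjection_iff_quasispectrum_subset_and_isSelfAdjoint.mpr ⟨?_, .cfcₙ⟩
  rw [cfcₙ_map_quasispectrum f a]
  rintro _ ⟨t, -, rfl⟩
  exact h01 t

lemma IsSelfAdjoint.norm_cfcₙ_sub_self_le (ha : IsSelfAdjoint a) {f : ℝ → ℝ}
    (hf : ContinuousOn f (quasispectrum ℝ a)) (hf0 : f 0 = 0) {c : ℝ}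
    (h : ∀ t ∈ quasispectrum ℝ a, |f t - t| ≤ c) : ‖cfcₙ f a - a‖ ≤ c := by
  have hcfc : cfcₙ (fun t ↦ f t - t) a = cfcₙ f a - a := by
    rw [cfcₙ_sub f (fun t ↦ t) a, cfcₙ_id' ℝ a]
  exact hcfc ▸ norm_cfcₙ_le h

lemma IsSelfAdjoint.exists_isStarProjection_mem_elemental_norm_sub_le (ha : IsSelfAdjoint a)
    {δ : ℝ} (hδ : δ < 1 / 4) (hsq : ‖a * a - a‖ ≤ δ) :
    ∃ p ∈ NonUnitalStarAlgebra.elemental ℂ a, IsStarProjection p ∧ ‖p - a‖ ≤ 2 * δ := by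
  have hσ : ∀ t ∈ quasispectrum ℝ a, |t * t - t| ≤ δ := fun t ht ↦
    (ha.abs_mul_self_sub_self_le_norm ht).trans hsq
  have hhalf : 1 / 2 ∉ quasispectrum ℝ a := fun h ↦ by
    have := hσ _ h
    norm_num [abs_of_neg] at this
    linarith
  have hcont := continuousOn_stepAtHalf hhalf
  have hstep0 : stepAtHalf 0 = 0 := if_neg (by norm_num)
  refine ⟨cfcₙ stepAtHalf a,
    cfcₙ_mem (𝕜' := ℂ) (hs := NonUnitalStarAlgebra.elemental.isClosed ℂ a) _
      (NonUnitalStarAlgebra.elemental.self_mem ℂ a),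
    ha.isStarProjection_cfcₙ hcont hstep0 stepAtHalf_eq_zero_or_one,
    ha.norm_cfcₙ_sub_self_le hcont hstep0 fun t ht ↦ abs_stepAtHalf_sub_le (hσ t ht)⟩

end CStarAlgebra

lemma mul_three_add_self_lt_sqrt {ε : ℝ} (hε0 : 0 < ε) (hε1 : ε < 1 / 16) :
    (3 + ε) * ε < Real.sqrt ε := by
  have hs := Real.sq_sqrt hε0.le
  have hs0 : 0 < Real.sqrt ε := Real.sqrt_pos.mpr hε0
  have hs4 : Real.sqrt ε < 1 / 4 := by
    rw [Real.sqrt_lt' (by norm_num)]; linarith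
  nlinarith

theorem projection_in_cstar_algebra_generated_by_near_projection_general
    {A : Type*} [NormedRing A] [StarRing A] [CStarRing A]
    [CompleteSpace A] [NormedAlgebra ℂ A] [StarModule ℂ A]
    (a r : A) (ha : IsSelfAdjoint a)
    (hr : IsSelfAdjoint r) (hr2 : r * r = r)
    (ε : ℝ) (hε1 : ε < 1 / 16) (hnorm : ‖a - r‖ < ε) :
    ∃ r' ∈ (NonUnitalStarAlgebra.adjoin ℂ {a}).topologicalClosure,
      IsSelfAdjoint r' ∧ r' * r' = r' ∧ ‖r' - a‖ < 2 * Real.sqrt ε := by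
  let _ : CStarAlgebra A := ⟨⟩
  have hε0 : 0 < ε := (norm_nonneg _).trans_lt hnorm
  have hrnorm : ‖r‖ ≤ 1 := IsStarProjection.norm_le r ⟨hr2, hr⟩
  have hanorm : ‖a‖ ≤ 1 + ε := by
    linarith [norm_le_norm_add_norm_sub' a r]
  have hsq : ‖a * a - a‖ ≤ (3 + ε) * ε :=
    (norm_mul_self_sub_self_le_of_isIdempotentElem hr2).trans
      (mul_le_mul (by linarith) hnorm.le (norm_nonneg _) (by linarith))
  have hlt := mul_three_add_self_lt_sqrt hε0 hε1
  obtain ⟨p, hpmem, hp, hpa⟩ :=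
    ha.exists_isStarProjection_mem_elemental_norm_sub_le (by nlinarith) hsq
  exact ⟨p, hpmem, hp.isSelfAdjoint, hp.isIdempotentElem, by linarith⟩

theorem projection_in_cstar_algebra_generated_by_near_projection
    {A : Type*} [NormedRing A] [StarRing A] [CStarRing A]
    [CompleteSpace A] [NormedAlgebra ℂ A] [StarModule ℂ A]
    (a r : A) (ha : IsSelfAdjoint a)
    (hr : IsSelfAdjoint r) (hr2 : r * r = r)
    (ε : ℝ) (hε0 : 0 < ε) (hε1 : ε < 1 / 16) (hnorm : ‖a - r‖ < ε) :
    ∃ r' ∈ (NonUnitalStarAlgebra.adjoin ℂ {a}).topologicalClosure,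
      IsSelfAdjoint r' ∧ r' * r' = r' ∧ ‖r' - a‖ < 2 * Real.sqrt ε :=
  projection_in_cstar_algebra_generated_by_near_projection_general a r ha hr hr2 ε hε1 hnorm
end

section
/- Let A be a C*-algebra, let 𝒰 be a nonprincipal ultrafilter on ℕ, and let p, q : ℕ → A be sequences such that each p(n) and each q(n) is a projection. Suppose ‖q(n)·p(n)·q(n) − p(n)‖ tends to 0 along 𝒰. Then there exists a sequence p' : ℕ → A of projections such that p'(n) ≤ q(n) for every n (i.e., p'(n)·q(n) = p'(n)), and ‖p'(n) − p(n)‖ tends to 0 along 𝒰. -/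
open Filter Topology

/-!
For projections `p`, `q` with `ε = ‖qpq - p‖` small, `b = qpq` is self-adjoint, satisfies
`bq = b`, and `‖b² - b‖ ≤ 3ε + ε²`, so the spectrum of `b` lies near `{0, 1}` and misses `1/2`.
The step function `1_{[1/2, ∞)}` is then continuous on it, and functional calculus yields a
projection `e` with `‖e - b‖ ≤ 2‖b² - b‖`. Factoring the step function as `(step x / x) · x`
gives `e = g(b) b`, hence `eq = e`.
-/

noncomputable def halfStep (x : ℝ) : ℝ := if x < 1 / 2 then 0 else 1

@[simp]
lemma halfStep_zero : halfStep 0 = 0 := by norm_num [halfStep]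

lemma halfStep_mul_self (x : ℝ) : halfStep x * halfStep x = halfStep x := by
  unfold halfStep; split_ifs <;> norm_num

lemma halfStep_div_mul_self (x : ℝ) : halfStep x / x * x = halfStep x := by
  rcases eq_or_ne x 0 with rfl | hx
  · simp
  · exact div_mul_cancel₀ _ hx

lemma halfStep_eventuallyEq_zero {x : ℝ} (hx : x < 1 / 2) : halfStep =ᶠ[𝓝 x] 0 :=
  eventually_of_mem (Iio_mem_nhds hx) fun _ hy => if_pos hy

lemma halfStep_eventuallyEq_one {x : ℝ} (hx : 1 / 2 < x) : halfStep =ᶠ[𝓝 x] 1 :=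
  eventually_of_mem (Ioi_mem_nhds hx) fun _ hy => if_neg (not_lt.2 (le_of_lt hy))

lemma continuousAt_halfStep {x : ℝ} (hx : x ≠ 1 / 2) : ContinuousAt halfStep x := by
  rcases hx.lt_or_gt with hx | hx
  · exact continuousAt_const.congr (halfStep_eventuallyEq_zero hx).symm
  · exact continuousAt_const.congr (halfStep_eventuallyEq_one hx).symm

lemma continuousAt_halfStep_div {x : ℝ} (hx : x ≠ 1 / 2) :
    ContinuousAt (fun y => halfStep y / y) x := by
  rcases hx.lt_or_gt with hx | hx
  · refine (continuousAt_const (y := (0 : ℝ))).congr ?_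
    filter_upwards [halfStep_eventuallyEq_zero hx] with y hy
    simp [hy]
  · exact (continuousAt_halfStep hx.ne').div continuousAt_id (by linarith)

lemma abs_halfStep_sub_le (x : ℝ) : |halfStep x - x| ≤ 2 * |x * x - x| := by
  have hfactor : x * x - x = x * (x - 1) := by ring
  unfold halfStep
  split_ifs with hx
  · rw [zero_sub, abs_neg, hfactor, abs_mul]
    have : 1 / 2 ≤ |x - 1| := by rw [abs_sub_comm, abs_of_pos (by linarith)]; linarith
    nlinarith [abs_nonneg x]
  · rw [abs_sub_comm, hfactor, abs_mul]
    have : 1 / 2 ≤ |x| := by rw [abs_of_nonneg (by linarith)]; linarith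
    nlinarith [abs_nonneg (x - 1)]

lemma norm_mul_self_sub_self_le {R : Type*} [NonUnitalNormedRing R] {p : R}
    (hp : IsIdempotentElem p) (hp₁ : ‖p‖ ≤ 1) (b : R) :
    ‖b * b - b‖ ≤ 3 * ‖b - p‖ + ‖b - p‖ * ‖b - p‖ := by
  set e := b - p
  have hexpand : b * b - b = p * e + e * p + e * e - e := by
    simp only [e, mul_sub, sub_mul, hp.eq]
    abel
  calc ‖b * b - b‖ ≤ ‖p‖ * ‖e‖ + ‖e‖ * ‖p‖ + ‖e‖ * ‖e‖ + ‖e‖ := by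
        rw [hexpand]
        refine (norm_sub_le _ _).trans ?_
        gcongr
        refine norm_add₃_le.trans ?_
        gcongr <;> exact norm_mul_le _ _
    _ ≤ 1 * ‖e‖ + ‖e‖ * 1 + ‖e‖ * ‖e‖ + ‖e‖ := by gcongr
    _ = 3 * ‖e‖ + ‖e‖ * ‖e‖ := by ring

section CStarAlgebra

variable {A : Type*} [NonUnitalCStarAlgebra A]

section SelfAdjoint

variable {b : A}

lemma IsSelfAdjoint.abs_mul_self_sub_le_norm (hb : IsSelfAdjoint b) {x : ℝ}
    (hx : x ∈ quasispectrum ℝ b) : |x * x - x| ≤ ‖b * b - b‖ := by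
  have hcfc : cfcₙ (fun x : ℝ => x * x - x) b = b * b - b := by
    rw [cfcₙ_sub (fun x : ℝ => x * x) (fun x : ℝ => x) b,
      cfcₙ_mul (fun x : ℝ => x) (fun x : ℝ => x) b, cfcₙ_id' ℝ b]
  simpa only [hcfc, Real.norm_eq_abs] using
    norm_apply_le_norm_cfcₙ (fun x : ℝ => x * x - x) b hx

variable (hb : IsSelfAdjoint b) (hsmall : ‖b * b - b‖ < 1 / 4)
include hb hsmall

lemma IsSelfAdjoint.ne_half_of_mem_quasispectrum {x : ℝ} (hx : x ∈ quasispectrum ℝ b) :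
    x ≠ 1 / 2 := by
  rintro rfl
  have := hb.abs_mul_self_sub_le_norm hx
  norm_num at this
  linarith

lemma IsSelfAdjoint.continuousOn_halfStep : ContinuousOn halfStep (quasispectrum ℝ b) :=
  fun _ hx =>
    (continuousAt_halfStep (hb.ne_half_of_mem_quasispectrum hsmall hx)).continuousWithinAt

lemma IsSelfAdjoint.isStarProjection_cfcₙ_halfStep : IsStarProjection (cfcₙ halfStep b) := by
  have := hb.continuousOn_halfStep hsmall
  refine ⟨?_, cfcₙ_predicate halfStep b⟩
  rw [IsIdempotentElem, ← cfcₙ_mul halfStep halfStep b]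
  exact cfcₙ_congr fun x _ => halfStep_mul_self x

lemma IsSelfAdjoint.norm_cfcₙ_halfStep_sub_le : ‖cfcₙ halfStep b - b‖ ≤ 2 * ‖b * b - b‖ := by
  have := hb.continuousOn_halfStep hsmall
  have hsub : cfcₙ (fun x => halfStep x - x) b = cfcₙ halfStep b - b := by
    rw [cfcₙ_sub halfStep (fun x : ℝ => x) b, cfcₙ_id' ℝ b]
  rw [← hsub]
  refine norm_cfcₙ_le fun x hx => ?_
  rw [Real.norm_eq_abs]
  exact (abs_halfStep_sub_le x).trans (by gcongr; exact hb.abs_mul_self_sub_le_norm hx)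

lemma IsSelfAdjoint.cfcₙ_halfStep_mul_of_mul_eq {q : A} (hbq : b * q = b) :
    cfcₙ halfStep b * q = cfcₙ halfStep b := by
  have hcont : ContinuousOn (fun y => halfStep y / y) (quasispectrum ℝ b) := fun x hx =>
    (continuousAt_halfStep_div (hb.ne_half_of_mem_quasispectrum hsmall hx)).continuousWithinAt
  have hfactor : cfcₙ halfStep b = cfcₙ (fun y => halfStep y / y) b * b := by
    conv_lhs => rw [← funext halfStep_div_mul_self]
    rw [cfcₙ_mul (fun y => halfStep y / y) (fun y : ℝ => y) b (hf0 := by simp), cfcₙ_id' ℝ b]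
  rw [hfactor, mul_assoc, hbq]

end SelfAdjoint

lemma exists_isStarProjection_mul_eq_norm_sub_le {p q : A} (hp : IsStarProjection p)
    (hq : IsStarProjection q) (hε : ‖q * p * q - p‖ < 1 / 16) :
    ∃ e : A, IsStarProjection e ∧ e * q = e ∧ ‖e - p‖ ≤ 8 * ‖q * p * q - p‖ := by
  set b := q * p * q
  set ε := ‖b - p‖
  have hb : IsSelfAdjoint b := by
    simpa only [b, hq.isSelfAdjoint.star_eq] using hp.isSelfAdjoint.conjugate q
  have hbq : b * q = b := by simp only [b, mul_assoc, hq.isIdempotentElem.eq]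
  have hdefect := norm_mul_self_sub_self_le hp.isIdempotentElem hp.norm_le b
  have hε₀ : 0 ≤ ε := norm_nonneg _
  have hsmall : ‖b * b - b‖ < 1 / 4 := by nlinarith
  refine ⟨cfcₙ halfStep b, hb.isStarProjection_cfcₙ_halfStep hsmall,
    hb.cfcₙ_halfStep_mul_of_mul_eq hsmall hbq, ?_⟩
  calc ‖cfcₙ halfStep b - p‖ ≤ ‖cfcₙ halfStep b - b‖ + ε :=
        norm_sub_le_norm_sub_add_norm_sub _ _ _
    _ ≤ 2 * ‖b * b - b‖ + ε := by gcongr; exact hb.norm_cfcₙ_halfStep_sub_le hsmall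
    _ ≤ 2 * (3 * ε + ε * ε) + ε := by gcongr
    _ ≤ 8 * ε := by nlinarith

end CStarAlgebra

theorem exists_representing_sequence_below_general
    {A : Type*} [NonUnitalNormedRing A] [StarRing A] [CStarRing A]
    [CompleteSpace A] [NormedSpace ℂ A] [IsScalarTower ℂ A A]
    [SMulCommClass ℂ A A] [StarModule ℂ A]
    (𝒰 : Ultrafilter ℕ)
    (p q : ℕ → A)
    (hp : ∀ n, IsSelfAdjoint (p n) ∧ p n * p n = p n)
    (hq : ∀ n, IsSelfAdjoint (q n) ∧ q n * q n = q n)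
    (hle : Tendsto (fun n => ‖q n * p n * q n - p n‖) 𝒰 (nhds 0)) :
    ∃ p' : ℕ → A,
      (∀ n, IsSelfAdjoint (p' n) ∧ p' n * p' n = p' n) ∧
      (∀ n, p' n * q n = p' n) ∧
      Tendsto (fun n => ‖p' n - p n‖) 𝒰 (nhds 0) := by
  let _ : NonUnitalCStarAlgebra A := {}
  have hnear : ∀ n, ∃ e : A, IsStarProjection e ∧ e * q n = e ∧
      (‖q n * p n * q n - p n‖ < 1 / 16 → ‖e - p n‖ ≤ 8 * ‖q n * p n * q n - p n‖) := by
    intro n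
    by_cases hn : ‖q n * p n * q n - p n‖ < 1 / 16
    · obtain ⟨e, he, heq, hdist⟩ := exists_isStarProjection_mul_eq_norm_sub_le
        ⟨(hp n).2, (hp n).1⟩ ⟨(hq n).2, (hq n).1⟩ hn
      exact ⟨e, he, heq, fun _ => hdist⟩
    · exact ⟨0, IsStarProjection.zero A, zero_mul _, fun h => absurd h hn⟩
  choose p' hproj hbelow hdist using hnear
  refine ⟨p', fun n => ⟨(hproj n).isSelfAdjoint, (hproj n).isIdempotentElem⟩, hbelow, ?_⟩
  refine squeeze_zero' (Eventually.of_forall fun n => norm_nonneg _) ?_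
    (by simpa using hle.const_mul 8)
  filter_upwards [hle.eventually (gt_mem_nhds (by norm_num : (0 : ℝ) < 1 / 16))] with n hn
  exact hdist n hn

theorem exists_representing_sequence_below
    {A : Type*} [NonUnitalNormedRing A] [StarRing A] [CStarRing A]
    [CompleteSpace A] [NormedSpace ℂ A] [IsScalarTower ℂ A A]
    [SMulCommClass ℂ A A] [StarModule ℂ A]
    (𝒰 : Ultrafilter ℕ) (h𝒰 : (𝒰 : Filter ℕ) ≤ Filter.cofinite)
    (p q : ℕ → A)
    (hp : ∀ n, IsSelfAdjoint (p n) ∧ p n * p n = p n)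
    (hq : ∀ n, IsSelfAdjoint (q n) ∧ q n * q n = q n)
    (hle : Tendsto (fun n => ‖q n * p n * q n - p n‖) 𝒰 (nhds 0)) :
    ∃ p' : ℕ → A,
      (∀ n, IsSelfAdjoint (p' n) ∧ p' n * p' n = p' n) ∧
      (∀ n, p' n * q n = p' n) ∧
      Tendsto (fun n => ‖p' n - p n‖) 𝒰 (nhds 0) :=
  exists_representing_sequence_below_general 𝒰 p q hp hq hle
end

section
/- Let A be a C*-algebra, let 𝒰 be a nonprincipal ultrafilter on ℕ, and let r : ℕ → ℕ → A be a doubly-indexed family such that each r(m)(n) is a projection and r(m)(n) ≤ r(m+1)(n) for all m, n. Let s : ℕ → A be a sequence of projections such that for every m the quantity ‖r(m)(n)·s(n) − r(m)(n)‖ tends to 0 along 𝒰 (as a function of n). Then there exists h : ℕ → ℕ such that: (i) for every m, the set {n : m ≤ h(n)} belongs to 𝒰, and (ii) ‖r(h(n))(n)·s(n) − r(h(n))(n)‖ tends to 0 along 𝒰. -/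
/-!
Greedy diagonalisation. With `U k` a decreasing basis of
the target filter, for every `m` the set of `n ≥ m` with `F k n ∈ U k` for all `k ≤ m` is in `l`,
and `h n` is the largest `m ≤ n` with that property. On the `m`-th set `h n ≥ m`, hence
`F (h n) n ∈ U (h n) ⊆ U m`.
-/

open Filter

theorem Filter.exists_tendsto_atTop_and_tendsto_diagonal {X : Type*} {l : Filter ℕ}
    {g : Filter X} [g.IsCountablyGenerated] (hl : l ≤ atTop) (F : ℕ → ℕ → X)
    (hF : ∀ m, Tendsto (F m) l g) :
    ∃ h : ℕ → ℕ, Tendsto h l atTop ∧ Tendsto (fun n => F (h n) n) l g := by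
  classical
  obtain ⟨U, hU⟩ := g.exists_antitone_basis
  let P : ℕ → ℕ → Prop := fun m n => ∀ k ≤ m, F k n ∈ U k
  have hP : ∀ m, ∀ᶠ n in l, m ≤ n ∧ P m n := fun m =>
    ((eventually_ge_atTop m).filter_mono hl).and <|
      (eventually_all_finite (Set.finite_Iic m)).2 fun k _ =>
        hU.1.tendsto_right_iff.1 (hF k) k trivial
  refine ⟨fun n => Nat.findGreatest (P · n) n, ?_, ?_⟩
  · exact tendsto_atTop.2 fun m =>
      (hP m).mono fun n hn => Nat.le_findGreatest hn.1 hn.2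
  · refine hU.1.tendsto_right_iff.2 fun m _ => (hP m).mono fun n hn => ?_
    exact hU.2 (Nat.le_findGreatest hn.1 hn.2)
      (Nat.findGreatest_spec (P := (P · n)) hn.1 hn.2 _ le_rfl)

theorem exists_diagonal_projection_between_general
    {A : Type*} [NonUnitalNormedRing A]
    (𝒰 : Ultrafilter ℕ) (h𝒰 : (𝒰 : Filter ℕ) ≤ Filter.cofinite)
    (r : ℕ → ℕ → A)
    (s : ℕ → A)
    (hbelow : ∀ m, Tendsto (fun n => ‖r m n * s n - r m n‖) 𝒰 (nhds 0)) :
    ∃ h : ℕ → ℕ,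
      (∀ m, {n | m ≤ h n} ∈ 𝒰) ∧
      Tendsto (fun n => ‖r (h n) n * s n - r (h n) n‖) 𝒰 (nhds 0) := by
  obtain ⟨h, h_atTop, h_diag⟩ := Filter.exists_tendsto_atTop_and_tendsto_diagonal
    (Nat.cofinite_eq_atTop ▸ h𝒰) (fun m n => ‖r m n * s n - r m n‖) hbelow
  exact ⟨h, tendsto_atTop.1 h_atTop, h_diag⟩

theorem exists_diagonal_projection_between
    {A : Type*} [NonUnitalNormedRing A] [StarRing A] [CStarRing A]
    [CompleteSpace A] [NormedSpace ℂ A] [IsScalarTower ℂ A A]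
    [SMulCommClass ℂ A A] [StarModule ℂ A]
    (𝒰 : Ultrafilter ℕ) (h𝒰 : (𝒰 : Filter ℕ) ≤ Filter.cofinite)
    (r : ℕ → ℕ → A)
    (hr : ∀ m n, IsSelfAdjoint (r m n) ∧ r m n * r m n = r m n)
    (hmono : ∀ m n, r m n * r (m + 1) n = r m n)
    (s : ℕ → A)
    (hs : ∀ n, IsSelfAdjoint (s n) ∧ s n * s n = s n)
    (hbelow : ∀ m, Tendsto (fun n => ‖r m n * s n - r m n‖) 𝒰 (nhds 0)) :
    ∃ h : ℕ → ℕ,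
      (∀ m, {n | m ≤ h n} ∈ 𝒰) ∧
      Tendsto (fun n => ‖r (h n) n * s n - r (h n) n‖) 𝒰 (nhds 0) :=
  exists_diagonal_projection_between_general 𝒰 h𝒰 r s hbelow
end

section
/- Let A be a C*-algebra and let 𝒰 be a nonprincipal ultrafilter on ℕ. Let r : ℕ → ℕ → A be a doubly-indexed family such that each r(i)(n) is a projection, r(i)(n) ≤ r(j)(n) whenever i ≤ j, and r(i)(n) ≠ r(j)(n) whenever i < j < n (so that for each n the projections r(0)(n) ≤ r(1)(n) ≤ … ≤ r(n−1)(n) form a strictly increasing chain of length n). Let f, g : ℕ → ℕ satisfy f(n) < n and g(n) < n for all n ≥ 1. Then f ≤_𝒰 g if and only if ‖r(g(n))(n)·r(f(n))(n)·r(g(n))(n) − r(f(n))(n)‖ tends to 0 along 𝒰. -/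
/-! A projection below another is fixed by compression, `q p q = p`, so the norms vanish on the
set where `f ≤ g`. Where `g < f` the compression is `q`, and the norm is that of the nonzero
projection `p - q`, which is `1` by the C⋆-identity. The norms therefore take only the values `0`
and `1` (for `n ≥ 1`), and tend to `0` along `𝒰` exactly when they are eventually `0`. -/

open Filter Topology

namespace IsStarProjection

variable {R : Type*} {p q : R}

theorem mul_eq_right_of_mul_eq_left [Mul R] [StarMul R] (hp : IsStarProjection p)
    (hq : IsStarProjection q) (hpq : p * q = p) : q * p = p := by
  simpa [hp.isSelfAdjoint.star_eq, hq.isSelfAdjoint.star_eq] using congr(star $(hpq))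

theorem mul_mul_self_of_mul_eq_left [Semigroup R] [StarMul R] (hp : IsStarProjection p)
    (hq : IsStarProjection q) (hpq : p * q = p) : q * p * q = p := by
  rw [mul_assoc, hpq, hp.mul_eq_right_of_mul_eq_left hq hpq]

theorem norm_eq_one_of_ne_zero [NonUnitalNormedRing R] [StarRing R] [CStarRing R]
    (hp : IsStarProjection p) (hp₀ : p ≠ 0) : ‖p‖ = 1 := by
  have h : ‖p‖ * ‖p‖ = ‖p‖ := by
    rw [← CStarRing.norm_star_mul_self, hp.isSelfAdjoint.star_eq, hp.isIdempotentElem.eq]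
  exact (mul_eq_left₀ (norm_ne_zero_iff.2 hp₀)).1 h

theorem norm_mul_mul_sub_of_mul_eq_left [NonUnitalNormedRing R] [StarRing R] [CStarRing R]
    (hp : IsStarProjection p) (hq : IsStarProjection q) (hqp : q * p = q) (hne : q ≠ p) :
    ‖q * p * q - p‖ = 1 := by
  rw [hqp, hq.isIdempotentElem.eq, ← norm_neg, neg_sub]
  exact (hq.sub_of_mul_eq_left hp hqp).norm_eq_one_of_ne_zero (sub_ne_zero.2 hne.symm)

end IsStarProjection

theorem tendsto_ite_zero_one_nhds_zero_iff {α : Type*} {l : Filter α} {P : α → Prop}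
    [DecidablePred P] :
    Tendsto (fun a => if P a then (0 : ℝ) else 1) l (𝓝 0) ↔ ∀ᶠ a in l, P a := by
  constructor
  · intro h
    filter_upwards [h.eventually_lt_const one_pos] with a ha
    by_contra hPa
    simp [hPa] at ha
  · intro h
    exact tendsto_const_nhds.congr' (h.mono fun a ha => (if_pos ha).symm)

theorem le_ultrafilter_iff_diagonal_projection_le_general
    {A : Type*} [NonUnitalNormedRing A] [StarRing A] [CStarRing A]
    (𝒰 : Ultrafilter ℕ) (h𝒰 : (𝒰 : Filter ℕ) ≤ Filter.cofinite)
    (r : ℕ → ℕ → A)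
    (hr : ∀ i n, IsSelfAdjoint (r i n) ∧ r i n * r i n = r i n)
    (hmono : ∀ i j n, i ≤ j → r i n * r j n = r i n)
    (hstrict : ∀ i j n, i < j → j < n → r i n ≠ r j n)
    (f g : ℕ → ℕ)
    (hf : ∀ n, 1 ≤ n → f n < n) :
    {n | f n ≤ g n} ∈ 𝒰 ↔
      Tendsto (fun n => ‖r (g n) n * r (f n) n * r (g n) n - r (f n) n‖) 𝒰 (nhds 0) := by
  have hproj i n : IsStarProjection (r i n) := ⟨(hr i n).2, (hr i n).1⟩
  have hnorm : ∀ᶠ n in (𝒰 : Filter ℕ),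
      ‖r (g n) n * r (f n) n * r (g n) n - r (f n) n‖ = if f n ≤ g n then 0 else 1 := by
    filter_upwards [h𝒰 (eventually_cofinite_ne 0)] with n hn
    split_ifs with hfg
    · rw [(hproj _ _).mul_mul_self_of_mul_eq_left (hproj _ _) (hmono _ _ _ hfg), sub_self,
        norm_zero]
    · have hgf := not_le.1 hfg
      exact (hproj _ _).norm_mul_mul_sub_of_mul_eq_left (hproj _ _) (hmono _ _ _ hgf.le)
        (hstrict _ _ _ hgf (hf n (Nat.one_le_iff_ne_zero.2 hn)))
  rw [tendsto_congr' hnorm, tendsto_ite_zero_one_nhds_zero_iff]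
  rfl

theorem le_ultrafilter_iff_diagonal_projection_le
    {A : Type*} [NonUnitalNormedRing A] [StarRing A] [CStarRing A]
    [CompleteSpace A] [NormedSpace ℂ A] [IsScalarTower ℂ A A]
    [SMulCommClass ℂ A A] [StarModule ℂ A]
    (𝒰 : Ultrafilter ℕ) (h𝒰 : (𝒰 : Filter ℕ) ≤ Filter.cofinite)
    (r : ℕ → ℕ → A)
    (hr : ∀ i n, IsSelfAdjoint (r i n) ∧ r i n * r i n = r i n)
    (hmono : ∀ i j n, i ≤ j → r i n * r j n = r i n)
    (hstrict : ∀ i j n, i < j → j < n → r i n ≠ r j n)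
    (f g : ℕ → ℕ)
    (hf : ∀ n, 1 ≤ n → f n < n) (hg : ∀ n, 1 ≤ n → g n < n) :
    {n | f n ≤ g n} ∈ 𝒰 ↔
      Tendsto (fun n => ‖r (g n) n * r (f n) n * r (g n) n - r (f n) n‖) 𝒰 (nhds 0) :=
  le_ultrafilter_iff_diagonal_projection_le_general 𝒰 h𝒰 r hr hmono hstrict f g hf
end

section
/- Let A be a C*-algebra and let 𝒰 be a nonprincipal ultrafilter on ℕ. Let r : ℕ → ℕ → A be a doubly-indexed family such that each r(i)(n) is a projection, r(i)(n) ≤ r(j)(n) whenever i ≤ j, and r(i)(n) ≠ r(j)(n) whenever i < j < n. Let G be a set of functions g : ℕ → ℕ, each nondecreasing with lim_n g(n) = ∞ and satisfying g(n) < n for all n ≥ 1, such that there is NO function h : ℕ → ℕ with both (a) for every m, the set {n : m ≤ h(n)} belongs to 𝒰, and (b) for every g ∈ G, the set {n : h(n) ≤ g(n)} belongs to 𝒰. Then there is NO sequence s : ℕ → A of projections such that both (i) for every m, ‖r(m)(n)·s(n) − r(m)(n)‖ tends to 0 along 𝒰 (as a function of n), and (ii) for every g ∈ G, ‖s(n)·r(g(n))(n)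 − s(n)‖ tends to 0 along 𝒰. -/
/-!
If `s` interpolated the gap, let `h n` be the largest `k < n` for which `r k n` lies almost
below `s n`. Then `h` eventually dominates every constant, and it is eventually bounded by every
`g ∈ G`: otherwise `q = r (g n) n < p = r (h n) n` would be projections with `p` almost below `s n`
and `s n` almost below `q`, which is impossible since the nonzero projection `p - q` has norm one.
So `h` would fill the gap of `G` in `ℕ^ℕ / 𝒰`.
-/

open Filter

namespace IsStarProjection

variable {E : Type*} [NonUnitalNormedRing E] [StarRing E] [CStarRing E]

theorem norm_eq_one {e : E} (he : IsStarProjection e) (h0 : e ≠ 0) : ‖e‖ = 1 := by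
  have hsq : ‖e‖ * ‖e‖ = ‖e‖ := by
    rw [← CStarRing.norm_star_mul_self, he.isSelfAdjoint.star_eq, he.isIdempotentElem.eq]
  exact (mul_eq_left₀ (norm_ne_zero_iff.mpr h0)).mp hsq

theorem one_le_two_mul_norm_mul_sub_add_norm_mul_sub {p q : E} (hp : IsStarProjection p)
    (hq : IsStarProjection q) (hqp : q * p = q) (hne : q ≠ p) (s : E) :
    1 ≤ 2 * ‖p * s - p‖ + ‖s * q - s‖ := by
  have hpq : p * q = q := by
    simpa [hp.isSelfAdjoint.star_eq, hq.isSelfAdjoint.star_eq] using congr(star $hqp)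
  set e := p - q
  have he : IsStarProjection e := hq.sub_of_mul_eq_left hp hqp
  have he_norm : ‖e‖ = 1 := he.norm_eq_one (sub_ne_zero.mpr hne.symm)
  have hep : e * p = e := by simp only [e, sub_mul, hp.isIdempotentElem.eq, hqp]
  have heq : e * q = 0 := by simp only [e, sub_mul, hpq, hq.isIdempotentElem.eq, sub_self]
  -- `e = e - e s + (e s - e s q) + e s q`, each piece controlled by one of the two norms
  have hdecomp : e = -(e * (p * s - p)) - e * (s * q - s) + e * (p * s - p) * q := by
    simp only [mul_sub, sub_mul, ← mul_assoc, hep, heq]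
    abel
  calc (1 : ℝ) = ‖e‖ := he_norm.symm
    _ ≤ ‖e‖ * ‖p * s - p‖ + ‖e‖ * ‖s * q - s‖ + ‖e‖ * ‖p * s - p‖ * ‖q‖ := by
      conv_lhs => rw [hdecomp]
      refine (norm_add_le _ _).trans (add_le_add ((norm_sub_le _ _).trans ?_) ?_)
      · rw [norm_neg]
        exact add_le_add (norm_mul_le _ _) (norm_mul_le _ _)
      · exact (norm_mul_le _ _).trans (mul_le_mul_of_nonneg_right (norm_mul_le _ _) (norm_nonneg _))
    _ ≤ 2 * ‖p * s - p‖ + ‖s * q - s‖ := by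
      have := mul_le_of_le_one_right (norm_nonneg (p * s - p)) (hq.norm_le q)
      rw [he_norm]
      linarith

end IsStarProjection

theorem eventually_le_findGreatest {l : Filter ℕ} (hl : l ≤ cofinite) {P : ℕ → ℕ → Prop}
    [∀ n, DecidablePred (P n)] (hP : ∀ m, ∀ᶠ n in l, P n m) (m : ℕ) :
    ∀ᶠ n in l, m ≤ Nat.findGreatest (P n) (n - 1) := by
  have hlarge : ∀ᶠ n in l, m < n :=
    hl (Nat.cofinite_eq_atTop ▸ eventually_gt_atTop m)
  filter_upwards [hP m, hlarge] with n hPm hmn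
  exact Nat.le_findGreatest (by omega) hPm

theorem no_interpolating_projection_of_gap_general
    {A : Type*} [NonUnitalNormedRing A] [StarRing A] [CStarRing A]
    (𝒰 : Ultrafilter ℕ) (h𝒰 : (𝒰 : Filter ℕ) ≤ Filter.cofinite)
    (r : ℕ → ℕ → A)
    (hr : ∀ i n, IsSelfAdjoint (r i n) ∧ r i n * r i n = r i n)
    (hmono : ∀ i j n, i ≤ j → r i n * r j n = r i n)
    (hstrict : ∀ i j n, i < j → j < n → r i n ≠ r j n)
    (G : Set (ℕ → ℕ))
    (hgap : ¬ ∃ h : ℕ → ℕ,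
      (∀ m, {n | m ≤ h n} ∈ 𝒰) ∧ (∀ g ∈ G, {n | h n ≤ g n} ∈ 𝒰)) :
    ¬ ∃ s : ℕ → A,
      (∀ n, IsSelfAdjoint (s n) ∧ s n * s n = s n) ∧
      (∀ m, Tendsto (fun n => ‖r m n * s n - r m n‖) 𝒰 (nhds 0)) ∧
      (∀ g ∈ G, Tendsto (fun n => ‖s n * r (g n) n - s n‖) 𝒰 (nhds 0)) := by
  classical
  rintro ⟨s, -, hlow, hhigh⟩
  have hproj : ∀ i n, IsStarProjection (r i n) := fun i n => ⟨(hr i n).2, (hr i n).1⟩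
  set h : ℕ → ℕ := fun n => Nat.findGreatest (fun k => ‖r k n * s n - r k n‖ < 4⁻¹) (n - 1)
  refine hgap ⟨h, eventually_le_findGreatest h𝒰
    (fun m => (hlow m).eventually (gt_mem_nhds (by norm_num))), fun g hg => ?_⟩
  filter_upwards [(hhigh g hg).eventually (gt_mem_nhds (by norm_num : (0 : ℝ) < 4⁻¹))]
    with n hsn
  by_contra! hgh
  have hh_le : h n ≤ n - 1 := Nat.findGreatest_le _
  have hh_ne : h n ≠ 0 := by omega
  have hh_lt : h n < n := by omega
  have hrs : ‖r (h n) n * s n - r (h n) n‖ < 4⁻¹ := Nat.findGreatest_of_ne_zero rfl hh_ne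
  have := (hproj (h n) n).one_le_two_mul_norm_mul_sub_add_norm_mul_sub (hproj (g n) n)
    (hmono _ _ n hgh.le) (hstrict _ _ n hgh hh_lt) (s n)
  linarith

theorem no_interpolating_projection_of_gap
    {A : Type*} [NonUnitalNormedRing A] [StarRing A] [CStarRing A]
    [CompleteSpace A] [NormedSpace ℂ A] [IsScalarTower ℂ A A]
    [SMulCommClass ℂ A A] [StarModule ℂ A]
    (𝒰 : Ultrafilter ℕ) (h𝒰 : (𝒰 : Filter ℕ) ≤ Filter.cofinite)
    (r : ℕ → ℕ → A)
    (hr : ∀ i n, IsSelfAdjoint (r i n) ∧ r i n * r i n = r i n)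
    (hmono : ∀ i j n, i ≤ j → r i n * r j n = r i n)
    (hstrict : ∀ i j n, i < j → j < n → r i n ≠ r j n)
    (G : Set (ℕ → ℕ))
    (hG : ∀ g ∈ G, Monotone g ∧ Tendsto g atTop atTop ∧ ∀ n, 1 ≤ n → g n < n)
    (hgap : ¬ ∃ h : ℕ → ℕ,
      (∀ m, {n | m ≤ h n} ∈ 𝒰) ∧ (∀ g ∈ G, {n | h n ≤ g n} ∈ 𝒰)) :
    ¬ ∃ s : ℕ → A,
      (∀ n, IsSelfAdjoint (s n) ∧ s n * s n = s n) ∧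
      (∀ m, Tendsto (fun n => ‖r m n * s n - r m n‖) 𝒰 (nhds 0)) ∧
      (∀ g ∈ G, Tendsto (fun n => ‖s n * r (g n) n - s n‖) 𝒰 (nhds 0)) :=
  no_interpolating_projection_of_gap_general 𝒰 h𝒰 r hr hmono hstrict G hgap
end

section
/- Let A be a C*-algebra, let r ∈ A be a projection, and let q ∈ A be a projection with q ≤ r. If both corners q·A·q and (r − q)·A·(r − q) are finite-dimensional as complex vector spaces, then the corner r·A·r is finite-dimensional as a complex vector space. -/
/-!
Writing `p = r - q`, the corner `rAr` is the sum of `qAq`, `qAp`, `pAq` and `pAp`, so it suffices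
that an off-diagonal corner `eAf` is finite-dimensional when `eAe` and `fAf` are. For `y ∈ eAf`
the elements `y y*` lie in `eAe`, so finitely many `y₁ y₁*, …, yₙ yₙ*` span all of them. Then
`x ↦ (yᵢ* x)ᵢ` maps `eAf` injectively into `(fAf)ⁿ`: if all `yᵢ* x` vanish, then so does
`x x* x`, and the C*-identity forces `x = 0`.
-/

open Submodule

section Corner

variable (R : Type*) {A : Type*} [CommSemiring R] [NonUnitalSemiring A] [Module R A]
  [IsScalarTower R A A] [SMulCommClass R A A]

def corner (e f : A) : Submodule R A :=
  LinearMap.range ((LinearMap.mulLeft R e).comp (LinearMap.mulRight R f))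

variable {R}

theorem mul_mul_mem_corner (e f a : A) : e * a * f ∈ corner R e f :=
  ⟨a, by simp [mul_assoc]⟩

theorem corner_add_left_le (e e' f : A) : corner R (e + e') f ≤ corner R e f ⊔ corner R e' f := by
  rintro _ ⟨a, rfl⟩
  simp only [LinearMap.comp_apply, LinearMap.mulLeft_apply, LinearMap.mulRight_apply, add_mul]
  exact add_mem_sup ⟨a, rfl⟩ ⟨a, rfl⟩

theorem corner_add_right_le (e f f' : A) : corner R e (f + f') ≤ corner R e f ⊔ corner R e f' := by
  rintro _ ⟨a, rfl⟩
  simp only [LinearMap.comp_apply, LinearMap.mulLeft_apply, LinearMap.mulRight_apply, mul_add]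
  exact add_mem_sup ⟨a, rfl⟩ ⟨a, rfl⟩

variable [StarRing A]

theorem mul_star_mem_corner {e e' f y z : A} (hy : y ∈ corner R e f) (hz : z ∈ corner R e' f) :
    y * star z ∈ corner R e (star e') := by
  obtain ⟨a, rfl⟩ := hy
  obtain ⟨b, rfl⟩ := hz
  simpa [star_mul, mul_assoc] using mul_mul_mem_corner (R := R) e (star e') (a * f * star f * star b)

theorem star_mul_mem_corner {e f f' y x : A} (hy : y ∈ corner R e f) (hx : x ∈ corner R e f') :
    star y * x ∈ corner R (star f) f' := by
  obtain ⟨a, rfl⟩ := hy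
  obtain ⟨b, rfl⟩ := hx
  simpa [star_mul, mul_assoc] using mul_mul_mem_corner (R := R) (star f) f' (star a * star e * e * b)

end Corner

section FiniteDimensional

variable {𝕜 A : Type*} [Field 𝕜] [NonUnitalRing A] [StarRing A] [Module 𝕜 A]
  [IsScalarTower 𝕜 A A] [SMulCommClass 𝕜 A A]

theorem exists_finite_span_mul_star_self {e f : A} (he : IsSelfAdjoint e)
    [FiniteDimensional 𝕜 (corner 𝕜 e e)] :
    ∃ s ⊆ (corner 𝕜 e f : Set A), s.Finite ∧
      (fun y => y * star y) '' (corner 𝕜 e f) ⊆ (span 𝕜 ((fun y => y * star y) '' s) : Set A) := by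
  have hle : span 𝕜 ((fun y => y * star y) '' (corner 𝕜 e f : Set A)) ≤ corner 𝕜 e e := by
    rw [span_le]
    rintro _ ⟨y, hy, rfl⟩
    simpa [he.star_eq] using mul_star_mem_corner hy hy
  have := Submodule.finiteDimensional_of_le hle
  obtain ⟨t, ht, hspan⟩ := (fg_span_iff_fg_span_finset_subset _).1 (Module.Finite.iff_fg.1 this)
  obtain ⟨s, hs, hsfin, hst⟩ := Set.exists_subset_image_finite_and (p := (· = (t : Set A))).1
    ⟨t, ht, t.finite_toSet, rfl⟩
  exact ⟨s, hs, hsfin, hst ▸ hspan ▸ subset_span⟩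

end FiniteDimensional

section CStarRing

variable {A : Type*} [NonUnitalNormedRing A] [StarRing A] [CStarRing A]

theorem eq_zero_of_mul_star_mul_self_eq_zero {x : A} (h : x * star x * x = 0) : x = 0 := by
  have hsq : star (star x * x) * (star x * x) = 0 := by
    rw [star_mul, star_star, mul_assoc, ← mul_assoc x, h, mul_zero]
  exact (CStarRing.star_mul_self_eq_zero_iff x).1 ((CStarRing.star_mul_self_eq_zero_iff _).1 hsq)

theorem eq_zero_of_star_mul_eq_zero {R : Type*} [CommSemiring R] [Module R A]
    [IsScalarTower R A A] [SMulCommClass R A A] {s : Set A} {x : A}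
    (hx : x * star x ∈ span R ((fun y => y * star y) '' s)) (h : ∀ y ∈ s, star y * x = 0) :
    x = 0 := by
  refine eq_zero_of_mul_star_mul_self_eq_zero ?_
  have hker : span R ((fun y => y * star y) '' s) ≤ LinearMap.ker (LinearMap.mulRight R x) := by
    rw [span_le]
    rintro _ ⟨y, hy, rfl⟩
    simp [mul_assoc, h y hy]
  exact hker hx

variable {𝕜 : Type*} [Field 𝕜] [Module 𝕜 A] [IsScalarTower 𝕜 A A] [SMulCommClass 𝕜 A A]

theorem finiteDimensional_corner {e f : A} (he : IsSelfAdjoint e) (hf : IsSelfAdjoint f)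
    [FiniteDimensional 𝕜 (corner 𝕜 e e)] [FiniteDimensional 𝕜 (corner 𝕜 f f)] :
    FiniteDimensional 𝕜 (corner 𝕜 e f) := by
  obtain ⟨s, hs, hsfin, hspan⟩ := exists_finite_span_mul_star_self (𝕜 := 𝕜) (f := f) he
  have : Finite s := hsfin
  let Φ : corner 𝕜 e f →ₗ[𝕜] s → corner 𝕜 f f := LinearMap.pi fun y =>
    (LinearMap.mulLeft 𝕜 (star (y : A)) ∘ₗ (corner 𝕜 e f).subtype).codRestrict _ fun x => by
      simpa [hf.star_eq] using star_mul_mem_corner (hs y.2) x.2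
  refine FiniteDimensional.of_injective Φ ?_
  rw [← LinearMap.ker_eq_bot, LinearMap.ker_eq_bot']
  intro x hx
  refine Subtype.ext (eq_zero_of_star_mul_eq_zero (hspan ⟨x, x.2, rfl⟩) fun y hy => ?_)
  exact congrArg Subtype.val (congrFun hx ⟨y, hy⟩)

theorem finiteDimensional_corner_add {e e' : A} (he : IsSelfAdjoint e) (he' : IsSelfAdjoint e')
    [FiniteDimensional 𝕜 (corner 𝕜 e e)] [FiniteDimensional 𝕜 (corner 𝕜 e' e')] :
    FiniteDimensional 𝕜 (corner 𝕜 (e + e') (e + e')) := by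
  have := finiteDimensional_corner (𝕜 := 𝕜) he he'
  have := finiteDimensional_corner (𝕜 := 𝕜) he' he
  exact Submodule.finiteDimensional_of_le <| (corner_add_left_le e e' _).trans <|
    sup_le_sup (corner_add_right_le e e e') (corner_add_right_le e' e e')

end CStarRing

theorem corner_finiteDimensional_of_pieces_general
    {A : Type*} [NonUnitalNormedRing A] [StarRing A] [CStarRing A]
    [NormedSpace ℂ A] [IsScalarTower ℂ A A]
    [SMulCommClass ℂ A A]
    (r q : A)
    (hr : IsSelfAdjoint r ∧ r * r = r)
    (hq : IsSelfAdjoint q ∧ q * q = q)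
    (hqAq : FiniteDimensional ℂ
      (LinearMap.range ((LinearMap.mulLeft ℂ q).comp (LinearMap.mulRight ℂ q))))
    (hrqArq : FiniteDimensional ℂ
      (LinearMap.range ((LinearMap.mulLeft ℂ (r - q)).comp (LinearMap.mulRight ℂ (r - q))))) :
    FiniteDimensional ℂ
      (LinearMap.range ((LinearMap.mulLeft ℂ r).comp (LinearMap.mulRight ℂ r))) := by
  have : FiniteDimensional ℂ (corner ℂ q q) := hqAq
  have : FiniteDimensional ℂ (corner ℂ (r - q) (r - q)) := hrqArq
  have h := finiteDimensional_corner_add (𝕜 := ℂ) hq.1 (hr.1.sub hq.1)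
  rwa [add_sub_cancel] at h

theorem corner_finiteDimensional_of_pieces
    {A : Type*} [NonUnitalNormedRing A] [StarRing A] [CStarRing A]
    [CompleteSpace A] [NormedSpace ℂ A] [IsScalarTower ℂ A A]
    [SMulCommClass ℂ A A] [StarModule ℂ A]
    (r q : A)
    (hr : IsSelfAdjoint r ∧ r * r = r)
    (hq : IsSelfAdjoint q ∧ q * q = q)
    (hqr : q * r = q)
    (hqAq : FiniteDimensional ℂ
      (LinearMap.range ((LinearMap.mulLeft ℂ q).comp (LinearMap.mulRight ℂ q))))
    (hrqArq : FiniteDimensional ℂ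
      (LinearMap.range ((LinearMap.mulLeft ℂ (r - q)).comp (LinearMap.mulRight ℂ (r - q))))) :
    FiniteDimensional ℂ
      (LinearMap.range ((LinearMap.mulLeft ℂ r).comp (LinearMap.mulRight ℂ r))) :=
  corner_finiteDimensional_of_pieces_general r q hr hq hqAq hrqArq
end
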